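/- Let H be a digraph and let y ∈ H be an ∃-canon, meaning: for all u,z, E(u,z) implies both E(y,z) and E(u,y). Then for every prenex sentence φ of positive equality-free first-order logic, H ⊨ φ if and only if H ⊨ φ[∃/y], where φ[∃/y] is obtained from φ by instantiating every existentially quantified variable as y. -/

import Mathlib

/-- Quantifier-free positive equality-free formulas over the digraph signature,
with `n` free variables. -/
inductive QF : ℕ → Type
  | atom {n : ℕ} (i j : Fin n) : QF n
  | conj {n : ℕ} (φ ψ : QF n) : QF n
  | disj {n : ℕ} (φ ψ : QF n) : QF n

/-- Prenex positive equality-free first-order formulas over the digraph signature. -/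
inductive PFO : ℕ → Type
  | qf  {n : ℕ} (φ : QF n) : PFO n
  | ex  {n : ℕ} (φ : PFO (n + 1)) : PFO n
  | all {n : ℕ} (φ : PFO (n + 1)) : PFO n

def QF.eval {V : Type*} (E : V → V → Prop) : {n : ℕ} → QF n → (Fin n → V) → Prop
  | _, .atom i j, ρ => E (ρ i) (ρ j)
  | _, .conj φ ψ, ρ => φ.eval E ρ ∧ ψ.eval E ρ
  | _, .disj φ ψ, ρ => φ.eval E ρ ∨ ψ.eval E ρ

/-- Evaluation of a prenex formula, where `u = some x` means every universal
variable is instantiated as `x` (instead of being genuinely universally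
quantified), and `e = some y` means every existential variable is instantiated
as `y`. `none` means genuine quantification. -/
def PFO.eval {V : Type*} (E : V → V → Prop) (u e : Option V) :
    {n : ℕ} → PFO n → (Fin n → V) → Prop
  | _, .qf φ, ρ => φ.eval E ρ
  | _, .ex φ, ρ =>
      match e with
      | none => ∃ v, φ.eval E u e (Fin.snoc ρ v)
      | some y => φ.eval E u e (Fin.snoc ρ y)
  | _, .all φ, ρ =>
      match u with
      | none => ∀ v, φ.eval E u e (Fin.snoc ρ v)
      | some x => φ.eval E u e (Fin.snoc ρ x)

/-- Satisfaction of a prenex sentence by the digraph `(V, E)`, with optional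
instantiation of the universal (`u`) and existential (`e`) variables. -/
def PFO.Sat {V : Type*} (E : V → V → Prop) (u e : Option V) (φ : PFO 0) : Prop :=
  φ.eval E u e (fun i => i.elim0)

/-!
Positive quantifier-free formulas are preserved by any relation `R` that maps edges to edges,
applied pointwise to the assignment. For an ∃-canon `y`, the relation "`b = a` or `b = y`" is such
a relation; it is reflexive and relates every vertex to `y`. Hence, going down the prefix, every
existential witness may be replaced by `y` while universal variables keep their values.
Conversely, `y` is always a legitimate existential witness.
-/

def IsExistsCanon {V : Type*} (E : V → V → Prop) (y : V) : Prop :=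
  ∀ u z, E u z → E y z ∧ E u y

theorem IsExistsCanon.edge_of_eq_or_eq {V : Type*} {E : V → V → Prop} {y : V}
    (hy : IsExistsCanon E y) {a b a' b' : V} (ha : a' = a ∨ a' = y) (hb : b' = b ∨ b' = y)
    (hab : E a b) : E a' b' := by
  rcases ha with rfl | rfl <;> rcases hb with rfl | rfl
  · exact hab
  · exact (hy _ _ hab).2
  · exact (hy _ _ hab).1
  · exact (hy _ _ (hy _ _ hab).1).2

theorem Fin.forall_rel_snoc {V W : Type*} {R : V → W → Prop} {n : ℕ}
    {ρ : Fin n → V} {ρ' : Fin n → W} {v : V} {w : W}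
    (hρ : ∀ i, R (ρ i) (ρ' i)) (hvw : R v w) :
    ∀ i, R (Fin.snoc (α := fun _ => V) ρ v i) (Fin.snoc (α := fun _ => W) ρ' w i) :=
  Fin.lastCases (by simpa using hvw) (fun i => by simpa using hρ i)

section

variable {V : Type*} {E : V → V → Prop}

theorem QF.eval_of_forall_rel {R : V → V → Prop}
    (hR : ∀ {a b a' b'}, R a a' → R b b' → E a b → E a' b') {n : ℕ} (φ : QF n)
    {ρ ρ' : Fin n → V} (hρ : ∀ i, R (ρ i) (ρ' i)) : φ.eval E ρ → φ.eval E ρ' := by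
  induction φ with
  | atom i j => simpa only [QF.eval] using hR (hρ i) (hρ j)
  | conj φ ψ ihφ ihψ => simpa only [QF.eval] using And.imp ihφ ihψ
  | disj φ ψ ihφ ihψ => simpa only [QF.eval] using Or.imp ihφ ihψ

theorem PFO.eval_some_of_forall_rel {R : V → V → Prop}
    (hR : ∀ {a b a' b'}, R a a' → R b b' → E a b → E a' b')
    (hrefl : ∀ v, R v v) {y : V} (hRy : ∀ v, R v y) {n : ℕ} (φ : PFO n)
    {ρ ρ' : Fin n → V} (hρ : ∀ i, R (ρ i) (ρ' i)) :
    φ.eval E none none ρ → φ.eval E none (some y) ρ' := by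
  induction φ with
  | qf φ => exact φ.eval_of_forall_rel (R := R) hR hρ
  | ex φ ih =>
      rintro ⟨v, hv⟩
      exact ih (Fin.forall_rel_snoc hρ (hRy v)) hv
  | all φ ih =>
      intro h v
      exact ih (Fin.forall_rel_snoc hρ (hrefl v)) (h v)

theorem PFO.eval_none_of_eval_some (u : Option V) (y : V) {n : ℕ} (φ : PFO n)
    (ρ : Fin n → V) : φ.eval E u (some y) ρ → φ.eval E u none ρ := by
  induction φ with
  | qf φ => exact id
  | ex φ ih => exact fun h => ⟨y, ih _ h⟩
  | all φ ih =>
      cases u with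
      | none => exact fun h v => ih _ (h v)
      | some x => exact ih _

end

/-- if `y` is an ∃-canon of the digraph `H = (V, E)`, then a prenex
positive equality-free sentence holds in `H` iff it holds with every existential
variable instantiated as `y`. -/
theorem stmt2 {V : Type*} (E : V → V → Prop) (y : V)
    (hy : ∀ u z, E u z → E y z ∧ E u y) :
    ∀ φ : PFO 0, PFO.Sat E none none φ ↔ PFO.Sat E none (some y) φ := by
  intro φ
  refine ⟨?_, φ.eval_none_of_eval_some none y _⟩
  exact φ.eval_some_of_forall_rel (R := fun a b => b = a ∨ b = y)
    (IsExistsCanon.edge_of_eq_or_eq hy) (fun _ => Or.inl rfl) (fun _ => Or.inr rfl)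
    (fun i => i.elim0)
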